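/- arXiv:1106.5635 — 2 statements merged into one kernel-verified Lean document; each statement's English description precedes it below -/
import Mathlib

section
/- Let μ be a spherically symmetric (rotation-invariant) absolutely continuous finite measure on ℝⁿ, let B be a closed ball centered at the origin, and let T ⊆ ℝⁿ be a star-shaped set with respect to the origin. Then μ(B ∩ T) · μ(ℝⁿ) ≥ μ(B) · μ(T). -/
/-!
Let `g x` be the probability that a Haar-random rotation `O` of `ℝⁿ` satisfies `O⁻¹ x ∈ T`.
Fubini and the rotation invariance of `μ` give `∫ g dμ = μ T`, and, since the ball `B` is
rotation invariant, `∫_B g dμ = μ (B ∩ T)`. If `‖x‖ ≤ ‖y‖`, some rotation carries `x` to a multiple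
`t • y` with `0 ≤ t ≤ 1`, so star-shapedness makes `g` a decreasing function of the norm, like the
indicator of `B`. Chebyshev's integral inequality for two similarly ordered functions,
`(∫ f) (∫ g) ≤ μ(univ) ∫ f g`, applied to `1_B` and `g` is the claim.
-/

open MeasureTheory Set Metric
open scoped ENNReal

/- Mathlib's `mul_add_mul_le_mul_add_mul` assumes additive cancellation, which fails in `ℝ≥0∞`. -/
theorem ENNReal.mul_add_mul_le_mul_add_mul {a b c d : ℝ≥0∞} (hab : a ≤ b) (hcd : c ≤ d) :
    a * d + b * c ≤ a * c + b * d := by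
  obtain ⟨e, rfl⟩ := exists_add_of_le hcd
  calc a * (c + e) + b * c = a * c + b * c + a * e := by ring
    _ ≤ a * c + b * c + b * e := by gcongr
    _ = a * c + b * (c + e) := by ring

theorem Monovary.ennreal_mul_add_mul_le_mul_add_mul {ι : Type*} {f g : ι → ℝ≥0∞}
    (hfg : Monovary f g) (i j : ι) : f i * g j + f j * g i ≤ f i * g i + f j * g j := by
  rcases lt_trichotomy (g i) (g j) with h | h | h
  · exact ENNReal.mul_add_mul_le_mul_add_mul (hfg h) h.le
  · rw [h]
  · rw [add_comm (f i * g j), add_comm (f i * g i)]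
    exact ENNReal.mul_add_mul_le_mul_add_mul (hfg h) h.le

theorem Monovary.lintegral_mul_lintegral_le {X : Type*} [MeasurableSpace X] {μ : Measure X}
    {f g : X → ℝ≥0∞} (hfg : Monovary f g) (hf : Measurable f) (hg : Measurable g) :
    (∫⁻ x, f x ∂μ) * ∫⁻ x, g x ∂μ ≤ (∫⁻ x, f x * g x ∂μ) * μ univ := by
  have hfg_meas : Measurable fun x => f x * g x := hf.mul hg
  have hfg_int : ∀ y, (∫⁻ x, f x ∂μ) * g y + f y * ∫⁻ x, g x ∂μ
      ≤ ∫⁻ x, f x * g x ∂μ + f y * g y * μ univ := fun y => calc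
    _ = ∫⁻ x, f x * g y + f y * g x ∂μ := by
      rw [lintegral_add_left (hf.mul_const _), lintegral_mul_const _ hf,
        lintegral_const_mul _ hg]
    _ ≤ ∫⁻ x, f x * g x + f y * g y ∂μ :=
      lintegral_mono fun x => hfg.ennreal_mul_add_mul_le_mul_add_mul x y
    _ = ∫⁻ x, f x * g x ∂μ + f y * g y * μ univ := by
      rw [lintegral_add_left hfg_meas, lintegral_const]
  have hdouble : 2 * ((∫⁻ x, f x ∂μ) * ∫⁻ x, g x ∂μ) ≤ 2 * ((∫⁻ x, f x * g x ∂μ) * μ univ) := calc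
    _ = ∫⁻ y, (∫⁻ x, f x ∂μ) * g y + f y * ∫⁻ x, g x ∂μ ∂μ := by
      rw [lintegral_add_left (hg.const_mul _), lintegral_const_mul _ hg,
        lintegral_mul_const _ hf, two_mul, mul_comm (∫⁻ x, f x ∂μ)]
    _ ≤ ∫⁻ y, ∫⁻ x, f x * g x ∂μ + f y * g y * μ univ ∂μ := lintegral_mono hfg_int
    _ = 2 * ((∫⁻ x, f x * g x ∂μ) * μ univ) := by
      rw [lintegral_add_left measurable_const, lintegral_const,
        lintegral_mul_const _ hfg_meas, two_mul]
  exact (ENNReal.mul_le_mul_iff_right two_ne_zero ENNReal.ofNat_ne_top).mp hdouble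

theorem monovary_of_antitone_along {ι α β γ : Type*} [Preorder α] [Preorder β] [LinearOrder γ]
    {f : ι → α} {g : ι → β} (φ : ι → γ) (hf : ∀ i j, φ i ≤ φ j → f j ≤ f i)
    (hg : ∀ i j, φ i ≤ φ j → g j ≤ g i) : Monovary f g := fun i j hij =>
  (le_total (φ i) (φ j)).elim (fun h => absurd (hg i j h) hij.not_ge) (hf j i)

section OrbitFraction

variable {G X : Type*} [Group G] [MulAction G X] [MeasurableSpace G]

/- With `g⁻¹` rather than `g`, moving `x` by `h` translates the set `{g | g⁻¹ • x ∈ s}` on the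
left by `h`, so left invariance of `ν` applies. -/
def orbitFraction (ν : Measure G) (s : Set X) (x : X) : ℝ≥0∞ := ν {g | g⁻¹ • x ∈ s}

variable [MeasurableSpace X] [MeasurableSMul₂ G X]

theorem smulInvariantMeasure_restrict (μ : Measure X) [SMulInvariantMeasure G X μ] {B : Set X}
    (hB : ∀ g : G, (g • ·) ⁻¹' B = B) : SMulInvariantMeasure G X (μ.restrict B) where
  measure_preimage_smul g s hs := by
    rw [Measure.restrict_apply hs, Measure.restrict_apply (hs.preimage (measurable_const_smul g)),
      ← hB g, ← preimage_inter, measure_preimage_smul, hB]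

variable [MeasurableInv G]

theorem measurableSet_inv_smul_mem {s : Set X} (hs : MeasurableSet s) :
    MeasurableSet {p : X × G | p.2⁻¹ • p.1 ∈ s} :=
  hs.preimage (measurable_snd.inv.smul measurable_fst)

theorem measurable_orbitFraction (ν : Measure G) [SFinite ν] {s : Set X} (hs : MeasurableSet s) :
    Measurable (orbitFraction ν s) :=
  measurable_measure_prodMk_left (measurableSet_inv_smul_mem hs)

theorem lintegral_orbitFraction (ν : Measure G) [IsProbabilityMeasure ν] (μ : Measure X)
    [SFinite μ] [SMulInvariantMeasure G X μ] {s : Set X} (hs : MeasurableSet s) :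
    ∫⁻ x, orbitFraction ν s x ∂μ = μ s := by
  have hS := measurableSet_inv_smul_mem (G := G) hs
  calc ∫⁻ x, orbitFraction ν s x ∂μ = μ.prod ν {p : X × G | p.2⁻¹ • p.1 ∈ s} :=
        (Measure.prod_apply hS).symm
    _ = ∫⁻ g, μ ((g⁻¹ • ·) ⁻¹' s) ∂ν := Measure.prod_apply_symm hS
    _ = μ s := by simp

theorem setLIntegral_orbitFraction (ν : Measure G) [IsProbabilityMeasure ν] (μ : Measure X)
    [SFinite μ] [SMulInvariantMeasure G X μ] {s B : Set X} (hs : MeasurableSet s)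
    (hB : ∀ g : G, (g • ·) ⁻¹' B = B) :
    ∫⁻ x in B, orbitFraction ν s x ∂μ = μ (s ∩ B) := by
  have := smulInvariantMeasure_restrict μ hB
  rw [lintegral_orbitFraction ν _ hs, Measure.restrict_apply hs]

end OrbitFraction

instance ContinuousLinearMap.continuousSMul_apply {𝕜 E : Type*} [NontriviallyNormedField 𝕜]
    [NormedAddCommGroup E] [NormedSpace 𝕜 E] : ContinuousSMul (E →L[𝕜] E) E :=
  ⟨isBoundedBilinearMap_apply.continuous⟩

section Unitary

variable {𝕜 E : Type*} [RCLike 𝕜] [NormedAddCommGroup E] [InnerProductSpace 𝕜 E]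
  [CompleteSpace E]

instance [FiniteDimensional 𝕜 E] : CompactSpace (unitary (E →L[𝕜] E)) := by
  have := FiniteDimensional.proper_rclike 𝕜 (E →L[𝕜] E)
  refine isCompact_iff_compactSpace.mp (isCompact_of_isClosed_isBounded isClosed_unitary ?_)
  refine (isBounded_iff_subset_closedBall 0).2 ⟨1, fun U hU => ?_⟩
  rw [mem_closedBall_zero_iff]
  exact ContinuousLinearMap.opNorm_le_bound _ zero_le_one fun x => by
    rw [ContinuousLinearMap.norm_map_of_mem_unitary hU, one_mul]

noncomputable instance : MeasurableSpace (unitary (E →L[𝕜] E)) := borel _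

instance : BorelSpace (unitary (E →L[𝕜] E)) := ⟨rfl⟩

theorem Unitary.smulInvariantMeasure_of_map_eq [MeasurableSpace E] [BorelSpace E]
    (μ : Measure E) (h : ∀ O : E ≃ₗᵢ[𝕜] E, μ.map O = μ) :
    SMulInvariantMeasure (unitary (E →L[𝕜] E)) E μ :=
  ⟨fun U s hs => by
    conv_rhs => rw [← h (Unitary.linearIsometryEquiv U)]
    exact (Measure.map_apply (Unitary.linearIsometryEquiv U).continuous.measurable hs).symm⟩

theorem Unitary.norm_smul (U : unitary (E →L[𝕜] E)) (x : E) : ‖U • x‖ = ‖x‖ :=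
  ContinuousLinearMap.norm_map_of_mem_unitary U.2 x

end Unitary

instance {G : Type*} [Group G] [TopologicalSpace G] [IsTopologicalGroup G] [CompactSpace G]
    [MeasurableSpace G] [BorelSpace G] :
    IsProbabilityMeasure (Measure.haarMeasure (⊤ : TopologicalSpace.PositiveCompacts G)) :=
  ⟨Measure.haarMeasure_self⟩

theorem indicator_one_closedBall_le_of_norm_le {E : Type*} [SeminormedAddCommGroup E] {R : ℝ}
    {x y : E} (h : ‖x‖ ≤ ‖y‖) :
    (closedBall (0 : E) R).indicator (1 : E → ℝ≥0∞) y ≤ (closedBall 0 R).indicator 1 x := by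
  by_cases hy : y ∈ closedBall 0 R
  · have hx : x ∈ closedBall 0 R :=
      mem_closedBall_zero_iff.2 (h.trans (mem_closedBall_zero_iff.1 hy))
    rw [indicator_of_mem hy, indicator_of_mem hx]
    exact le_rfl
  · rw [indicator_of_notMem hy]
    exact zero_le

section StarConvex

variable {E : Type*} [NormedAddCommGroup E] [InnerProductSpace ℝ E] [CompleteSpace E]

theorem Unitary.exists_smul_eq_of_norm_eq {x z : E} (h : ‖x‖ = ‖z‖) :
    ∃ U : unitary (E →L[ℝ] E), U • x = z :=
  ⟨Unitary.linearIsometryEquiv.symm (Submodule.reflection (ℝ ∙ (x - z))ᗮ), by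
    change Unitary.linearIsometryEquiv _ x = z
    rw [MulEquiv.apply_symm_apply, Submodule.reflection_sub h]⟩

variable [MeasurableSpace E]

theorem StarConvex.orbitFraction_le_of_norm_le [FiniteDimensional ℝ E] [BorelSpace E]
    {T : Set E} (hT : StarConvex ℝ 0 T) (ν : Measure (unitary (E →L[ℝ] E))) [ν.IsMulLeftInvariant]
    {x y : E} (hxy : ‖x‖ ≤ ‖y‖) : orbitFraction ν T y ≤ orbitFraction ν T x := by
  set t := ‖x‖ / ‖y‖
  have ht0 : 0 ≤ t := by positivity
  have ht1 : t ≤ 1 := div_le_one_of_le₀ hxy (norm_nonneg y)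
  have hnorm : ‖x‖ = ‖t • y‖ := by
    rw [norm_smul, Real.norm_of_nonneg ht0, div_mul_cancel_of_imp]
    intro hy
    exact le_antisymm (hy ▸ hxy) (norm_nonneg x)
  obtain ⟨U, hU⟩ := Unitary.exists_smul_eq_of_norm_eq hnorm
  calc ν {g | g⁻¹ • y ∈ T} ≤ ν ((U⁻¹ * ·) ⁻¹' {g | g⁻¹ • x ∈ T}) :=
        measure_mono fun g hg => by
          simp only [mem_preimage, mem_ofPred_eq, mul_inv_rev, inv_inv, mul_smul, hU,
            smul_comm g⁻¹ t y]
          exact starConvex_zero_iff.1 hT hg ht0 ht1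
    _ = ν {g | g⁻¹ • x ∈ T} := measure_preimage_mul ν _ _

theorem StarConvex.measure_closedBall_mul_le [FiniteDimensional ℝ E] [BorelSpace E]
    (μ : Measure E) [SFinite μ] [SMulInvariantMeasure (unitary (E →L[ℝ] E)) E μ] {T : Set E}
    (hT : StarConvex ℝ 0 T) (hTm : MeasurableSet T) (R : ℝ) :
    μ (closedBall 0 R) * μ T ≤ μ (closedBall 0 R ∩ T) * μ univ := by
  set B := closedBall (0 : E) R
  set ν := Measure.haarMeasure (⊤ : TopologicalSpace.PositiveCompacts (unitary (E →L[ℝ] E)))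
  have hB_inv : ∀ U : unitary (E →L[ℝ] E), (U • ·) ⁻¹' B = B := fun U => by
    ext x
    simp [B, Unitary.norm_smul]
  have hmono : Monovary (B.indicator 1) (orbitFraction ν T) :=
    monovary_of_antitone_along norm
      (fun _ _ => indicator_one_closedBall_le_of_norm_le)
      (fun _ _ hxy => hT.orbitFraction_le_of_norm_le ν hxy)
  calc μ B * μ T = (∫⁻ x, B.indicator 1 x ∂μ) * ∫⁻ x, orbitFraction ν T x ∂μ := by
        rw [lintegral_indicator_one measurableSet_closedBall, lintegral_orbitFraction ν μ hTm]
    _ ≤ (∫⁻ x, B.indicator 1 x * orbitFraction ν T x ∂μ) * μ univ :=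
        hmono.lintegral_mul_lintegral_le (measurable_const.indicator measurableSet_closedBall)
          (measurable_orbitFraction ν hTm)
    _ = μ (B ∩ T) * μ univ := by
        rw [inter_comm, ← setLIntegral_orbitFraction ν μ hTm hB_inv,
          ← lintegral_indicator measurableSet_closedBall]
        simp only [← indicator_mul_left, Pi.one_apply, one_mul, B]

end StarConvex

theorem starshaped_ball_correlation_general (n : ℕ)
    (μ : Measure (EuclideanSpace ℝ (Fin n))) [IsFiniteMeasure μ]
    (hinv : ∀ O : EuclideanSpace ℝ (Fin n) ≃ₗᵢ[ℝ] EuclideanSpace ℝ (Fin n),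
      Measure.map O μ = μ)
    (R : ℝ)
    (T : Set (EuclideanSpace ℝ (Fin n))) (hTmeas : MeasurableSet T)
    (hstar : ∀ x ∈ T, ∀ t : ℝ, 0 ≤ t → t ≤ 1 → t • x ∈ T) :
    μ (Metric.closedBall 0 R) * μ T ≤ μ (Metric.closedBall 0 R ∩ T) * μ Set.univ := by
  have := Unitary.smulInvariantMeasure_of_map_eq μ hinv
  have hT : StarConvex ℝ 0 T := starConvex_zero_iff.2 fun x hx t => hstar x hx t
  exact hT.measure_closedBall_mul_le μ hTmeas R

theorem starshaped_ball_correlation (n : ℕ)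
    (μ : Measure (EuclideanSpace ℝ (Fin n))) [IsFiniteMeasure μ]
    (hac : μ ≪ volume)
    (hinv : ∀ O : EuclideanSpace ℝ (Fin n) ≃ₗᵢ[ℝ] EuclideanSpace ℝ (Fin n),
      Measure.map O μ = μ)
    (R : ℝ) (hR : 0 ≤ R)
    (T : Set (EuclideanSpace ℝ (Fin n))) (hTmeas : MeasurableSet T)
    (hstar : ∀ x ∈ T, ∀ t : ℝ, 0 ≤ t → t ≤ 1 → t • x ∈ T) :
    μ (Metric.closedBall 0 R) * μ T ≤ μ (Metric.closedBall 0 R ∩ T) * μ Set.univ :=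
  starshaped_ball_correlation_general n μ hinv R T hTmeas hstar
end

section
/- Let B ⊂ ℝ^d be a convex body, and for a convex set C ⊆ ℝ^d define r_B(C) = sup{h ≥ 0 : ∃ t ∈ ℝ^d, hB + t ⊆ C} (with r_B(∅) = −∞). Let λ₁, …, λ_m be affine functions on ℝ^d, and for ȳ = (y₁, …, y_m) ∈ ℝ^m let C(ȳ) = {x : λ_i(x) + y_i ≤ 0 for all i}. Then the function ȳ ↦ r_B(C(ȳ)) is concave on the set where it is finite. -/
/-- The inradius of `C` relative to the convex body `B`, as an extended real:
the supremum of homothety coefficients `h ≥ 0` such that a translate of `hB`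
fits inside `C`.  It is `⊥ = -∞` when `C` is empty and may be `⊤ = +∞` for
unbounded `C`. -/
noncomputable def relInradius {d : ℕ} (B C : Set (EuclideanSpace ℝ (Fin d))) : EReal :=
  sSup {h : EReal | ∃ r : ℝ, h = (r : EReal) ∧ 0 ≤ r ∧
    ∃ t : EuclideanSpace ℝ (Fin d), (fun b => r • b + t) '' B ⊆ C}

theorem relInradius_polytope_concave (d m : ℕ)
    (B : Set (EuclideanSpace ℝ (Fin d)))
    (hBconv : Convex ℝ B) (hBcomp : IsCompact B) (hBint : (interior B).Nonempty)
    (Λ : Fin m → (EuclideanSpace ℝ (Fin d) →ᵃ[ℝ] ℝ))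
    (C : (Fin m → ℝ) → Set (EuclideanSpace ℝ (Fin d)))
    (hC : ∀ y, C y = {x | ∀ i, Λ i x + y i ≤ 0})
    (y₁ y₂ : Fin m → ℝ) (t : ℝ) (ht0 : 0 ≤ t) (ht1 : t ≤ 1)
    (h₁b : relInradius B (C y₁) ≠ ⊥) (h₁t : relInradius B (C y₁) ≠ ⊤)
    (h₂b : relInradius B (C y₂) ≠ ⊥) (h₂t : relInradius B (C y₂) ≠ ⊤) :
    ((t * (relInradius B (C y₁)).toReal
        + (1 - t) * (relInradius B (C y₂)).toReal : ℝ) : EReal)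
      ≤ relInradius B (C (t • y₁ + (1 - t) • y₂)) := by
  set a₁ := (relInradius B (C y₁)).toReal with ha₁
  set a₂ := (relInradius B (C y₂)).toReal with ha₂
  have hs₁ : relInradius B (C y₁) = (a₁ : EReal) := (EReal.coe_toReal h₁t h₁b).symm
  have hs₂ : relInradius B (C y₂) = (a₂ : EReal) := (EReal.coe_toReal h₂t h₂b).symm
  -- approximation lemma
  have approx : ∀ (y : Fin m → ℝ) (a z : ℝ), relInradius B (C y) = (a : EReal) → z < a →
      ∃ r : ℝ, z < r ∧ 0 ≤ r ∧
        ∃ T : EuclideanSpace ℝ (Fin d), (fun b => r • b + T) '' B ⊆ C y := by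
    intro y a z hy hz
    have : (z : EReal) < sSup {h : EReal | ∃ r : ℝ, h = (r : EReal) ∧ 0 ≤ r ∧
        ∃ T : EuclideanSpace ℝ (Fin d), (fun b => r • b + T) '' B ⊆ C y} := by
      rw [show sSup _ = relInradius B (C y) from rfl, hy]
      exact_mod_cast hz
    obtain ⟨h, ⟨r, rfl, hr0, T, hT⟩, hzh⟩ := lt_sSup_iff.mp this
    exact ⟨r, by exact_mod_cast hzh, hr0, T, hT⟩
  -- reduce to showing every real below the LHS is below the RHS
  by_contra hcon
  push_neg at hcon
  obtain ⟨z, hz1, hz2⟩ := EReal.exists_between_coe_real hcon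
  have hzlt : z < t * a₁ + (1 - t) * a₂ := by exact_mod_cast hz2
  set ε := t * a₁ + (1 - t) * a₂ - z with hε
  have hε0 : 0 < ε := by linarith
  obtain ⟨r₁, hr₁z, hr₁0, T₁, hT₁⟩ := approx y₁ a₁ (a₁ - ε) hs₁ (by linarith)
  obtain ⟨r₂, hr₂z, hr₂0, T₂, hT₂⟩ := approx y₂ a₂ (a₂ - ε) hs₂ (by linarith)
  -- the combined homothety fits inside the combined polytope
  have hmem : ((t * r₁ + (1 - t) * r₂ : ℝ) : EReal) ∈
      {h : EReal | ∃ r : ℝ, h = (r : EReal) ∧ 0 ≤ r ∧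
        ∃ T : EuclideanSpace ℝ (Fin d),
          (fun b => r • b + T) '' B ⊆ C (t • y₁ + (1 - t) • y₂)} := by
    refine ⟨t * r₁ + (1 - t) * r₂, rfl,
      add_nonneg (mul_nonneg ht0 hr₁0) (mul_nonneg (by linarith) hr₂0),
      t • T₁ + (1 - t) • T₂, ?_⟩
    rw [hC]
    rintro x ⟨b, hb, rfl⟩
    intro i
    have h1 : Λ i (r₁ • b + T₁) + y₁ i ≤ 0 := by
      have := hT₁ ⟨b, hb, rfl⟩
      rw [hC] at this; exact this i
    have h2 : Λ i (r₂ • b + T₂) + y₂ i ≤ 0 := by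
      have := hT₂ ⟨b, hb, rfl⟩
      rw [hC] at this; exact this i
    have hx : (t * r₁ + (1 - t) * r₂) • b + (t • T₁ + (1 - t) • T₂)
        = AffineMap.lineMap (r₂ • b + T₂) (r₁ • b + T₁) t := by
      rw [AffineMap.lineMap_apply_module]
      module
    have hΛ : Λ i ((t * r₁ + (1 - t) * r₂) • b + (t • T₁ + (1 - t) • T₂))
        = t * Λ i (r₁ • b + T₁) + (1 - t) * Λ i (r₂ • b + T₂) := by
      rw [hx, AffineMap.apply_lineMap, AffineMap.lineMap_apply_module]
      simp only [smul_eq_mul]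
      ring
    simp only [Set.mem_setOf_eq, hΛ, Pi.add_apply, Pi.smul_apply, smul_eq_mul]
    nlinarith
  have : (z : EReal) ≤ relInradius B (C (t • y₁ + (1 - t) • y₂)) := by
    refine le_trans ?_ (le_sSup hmem)
    have : z ≤ t * r₁ + (1 - t) * r₂ := by nlinarith
    exact_mod_cast this
  exact absurd (lt_of_le_of_lt this hz1) (lt_irrefl _)
end
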